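/- arXiv:2310.00537 — 3 statements merged into one kernel-verified Lean document; each statement's English description precedes it below -/
import Mathlib

section
/- If γ_L < γ_R, f(γ_L,ρ_L) = f(γ_R,ρ_R), and 1/2 > ρ_L > ρ_R, then ψ(γ_L,ρ_L) > ψ(γ_R,ρ_R); if instead ρ_R > ρ_L > 1/2 then ψ(γ_R,ρ_R) > ψ(γ_L,ρ_L). -/
/-- order relations of z-values across a zero-speed γ-front. -/
theorem stmt_8 (γL γR ρL ρR : ℝ) (hγL : 0 < γL) (hγγ : γL < γR)
    (hρL : ρL ∈ Set.Icc (0:ℝ) 1) (hρR : ρR ∈ Set.Icc (0:ℝ) 1)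
    (hf : γL * ρL * (1 - ρL) = γR * ρR * (1 - ρR)) :
    (ρR < ρL → ρL < 1/2 →
      Real.sign (1/2 - ρL) * (γL * ρL * (1 - ρL) - γL * (1/2) * (1 - 1/2))
        > Real.sign (1/2 - ρR) * (γR * ρR * (1 - ρR) - γR * (1/2) * (1 - 1/2))) ∧
    (ρL < ρR → 1/2 < ρL →
      Real.sign (1/2 - ρR) * (γR * ρR * (1 - ρR) - γR * (1/2) * (1 - 1/2))
        > Real.sign (1/2 - ρL) * (γL * ρL * (1 - ρL) - γL * (1/2) * (1 - 1/2))) := by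
  constructor
  · intro h1 h2
    rw [Real.sign_of_pos (by linarith), Real.sign_of_pos (by linarith)]
    nlinarith
  · intro h1 h2
    rw [Real.sign_of_neg (by linarith), Real.sign_of_neg (by linarith)]
    nlinarith
end

section
/- The non-classical shock from ρ̂ to ρ̌ (with ρ̌ < ρ̂ as above) violates the Lax entropy condition: its speed V satisfies f'(γ,ρ̂) < V < f'(γ,ρ̌), where f'(γ,ρ) = γ(1-2ρ), i.e., the characteristics emanate from the shock rather than impinge on it. -/
/-- the non-classical shock violates the Lax entropy condition:
`f'(γ,ρ̂) < V < f'(γ,ρ̌)` with `f'(γ,ρ) = γ(1-2ρ)`. -/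
theorem stmt_13 (γ V α : ℝ) (hγ : 0 < γ) (hV : 0 ≤ V) (hVγ : V < γ)
    (hα : α ∈ Set.Ioo (0:ℝ) 1) :
    let ρc := (γ - V) / (2 * γ) * (1 - Real.sqrt (1 - α))
    let ρh := (γ - V) / (2 * γ) * (1 + Real.sqrt (1 - α))
    γ * (1 - 2 * ρh) < V ∧ V < γ * (1 - 2 * ρc) := by
  obtain ⟨h0, h1⟩ := hα
  have hs : 0 < Real.sqrt (1 - α) := Real.sqrt_pos.mpr (by linarith)
  have key : γ * (1 - 2 * ((γ - V) / (2 * γ) * (1 + Real.sqrt (1 - α)))) =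
      V - (γ - V) * Real.sqrt (1 - α) := by field_simp; ring
  have key2 : γ * (1 - 2 * ((γ - V) / (2 * γ) * (1 - Real.sqrt (1 - α)))) =
      V + (γ - V) * Real.sqrt (1 - α) := by field_simp; ring
  constructor
  · rw [key]; nlinarith
  · rw [key2]; nlinarith
end

section
/- Let z: ℝ → ℝ and γ: ℝ → ℝ be such that z(x) = ψ(γ(x), ρ(x)) for piecewise constant γ taking values in [γ_min, γ_max] (0 < γ_min) and ρ: ℝ → [0,1]. Then the total variation of x ↦ f(γ(x), ρ(x)) satisfies TV(f(γ(·),ρ(·))) ≤ TV(z(·)) + (1/4)TV(γ(·)). -/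
/-!
For `γ ≥ 0` one has `f(γ, ρ) - γ/4 = -γ (ρ - 1/2)²`, so `f(γ, ρ) = γ/4 - |ψ(γ, ρ)|`.
Hence `f(γ(·), ρ(·)) = γ/4 - |z|`, and the bound follows because total variation is
subadditive and is not increased by the 1-Lipschitz map `t ↦ |t|`.
-/

section Variation

variable {α E : Type*} [LinearOrder α] [SeminormedAddCommGroup E]

theorem eVariationOn_sub_le (f g : α → E) (s : Set α) :
    eVariationOn (f - g) s ≤ eVariationOn f s + eVariationOn g s := by
  refine iSup_le fun ⟨n, u, hu, us⟩ => ?_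
  calc ∑ i ∈ Finset.range n, edist ((f - g) (u (i + 1))) ((f - g) (u i))
      ≤ ∑ i ∈ Finset.range n,
          (edist (f (u (i + 1))) (f (u i)) + edist (g (u (i + 1))) (g (u i))) :=
        Finset.sum_le_sum fun i _ => by
          simpa only [Pi.sub_apply, sub_eq_add_neg, edist_neg_neg] using
            edist_add_add_le (f (u (i + 1))) (-g (u (i + 1))) (f (u i)) (-g (u i))
    _ = ∑ i ∈ Finset.range n, edist (f (u (i + 1))) (f (u i))
          + ∑ i ∈ Finset.range n, edist (g (u (i + 1))) (g (u i)) :=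
        Finset.sum_add_distrib
    _ ≤ eVariationOn f s + eVariationOn g s :=
        add_le_add (eVariationOn.sum_le hu us) (eVariationOn.sum_le hu us)

theorem eVariationOn_norm_comp_le (f : α → E) (s : Set α) :
    eVariationOn (fun x => ‖f x‖) s ≤ eVariationOn f s := by
  simpa [Function.comp_def] using
    lipschitzWith_one_norm.lipschitzOnWith.comp_eVariationOn_le (Set.mapsTo_univ f s)

theorem eVariationOn_const_smul_le {𝕜 : Type*} [SeminormedRing 𝕜] [Module 𝕜 E]
    [IsBoundedSMul 𝕜 E] (c : 𝕜) (f : α → E) (s : Set α) :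
    eVariationOn (c • f) s ≤ ‖c‖₊ * eVariationOn f s :=
  (lipschitzWith_smul c).lipschitzOnWith.comp_eVariationOn_le (Set.mapsTo_univ f s)

end Variation

-- `flux` and `psi` are the functions `f` and `ψ` of the statement.
def flux (γ ρ : ℝ) : ℝ := γ * ρ * (1 - ρ)

noncomputable def psi (γ ρ : ℝ) : ℝ := Real.sign (1 / 2 - ρ) * (flux γ ρ - flux γ (1 / 2))

theorem flux_eq_sub_abs_psi {γ : ℝ} (hγ : 0 ≤ γ) (ρ : ℝ) : flux γ ρ = γ / 4 - |psi γ ρ| := by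
  have hdiff : flux γ ρ - flux γ (1 / 2) = -(γ * (1 / 2 - ρ) ^ 2) := by unfold flux; ring
  rcases eq_or_ne (1 / 2 - ρ) 0 with hρ | hρ
  · have : ρ = 1 / 2 := by linarith
    subst this
    simp only [psi, hρ, Real.sign_zero, zero_mul, abs_zero, sub_zero, flux]
    ring
  · have hsign : |Real.sign (1 / 2 - ρ)| = 1 := by
      rcases Real.sign_apply_eq_of_ne_zero _ hρ with h | h <;> rw [h] <;> norm_num
    rw [psi, hdiff, abs_mul, hsign, one_mul, abs_neg,
      abs_of_nonneg (by positivity)]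
    unfold flux
    ring

theorem stmt_16_general (γ ρ z : ℝ → ℝ) (γmin γmax : ℝ) (hγmin : 0 < γmin)
    (hγrange : ∀ x, γ x ∈ Set.Icc γmin γmax)
    (hz : ∀ x, z x = Real.sign (1/2 - ρ x) *
      (γ x * ρ x * (1 - ρ x) - γ x * (1/2) * (1 - 1/2))) :
    eVariationOn (fun x => γ x * ρ x * (1 - ρ x)) Set.univ ≤
      eVariationOn z Set.univ + (1 / 4) * eVariationOn γ Set.univ := by
  have hsplit : (fun x => γ x * ρ x * (1 - ρ x)) = (1 / 4 : ℝ) • γ - fun x => ‖z x‖ := by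
    funext x
    have hγ : 0 ≤ γ x := hγmin.le.trans (hγrange x).1
    have h := flux_eq_sub_abs_psi hγ (ρ x)
    simp only [flux, psi] at h
    simp only [Pi.sub_apply, Pi.smul_apply, smul_eq_mul, Real.norm_eq_abs, hz x]
    linarith
  calc eVariationOn (fun x => γ x * ρ x * (1 - ρ x)) Set.univ
      ≤ eVariationOn ((1 / 4 : ℝ) • γ) Set.univ + eVariationOn (fun x => ‖z x‖) Set.univ := by
        rw [hsplit]; exact eVariationOn_sub_le _ _ _
    _ ≤ (1 / 4) * eVariationOn γ Set.univ + eVariationOn z Set.univ := by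
        gcongr
        · simpa using eVariationOn_const_smul_le (1 / 4 : ℝ) γ Set.univ
        · exact eVariationOn_norm_comp_le z Set.univ
    _ = eVariationOn z Set.univ + (1 / 4) * eVariationOn γ Set.univ := add_comm _ _

/-- `TV(f(γ(·),ρ(·))) ≤ TV(z(·)) + (1/4)·TV(γ(·))`, where
`z(x) = ψ(γ(x), ρ(x))`. -/
theorem stmt_16 (γ ρ z : ℝ → ℝ) (γmin γmax : ℝ) (hγmin : 0 < γmin)
    (hγrange : ∀ x, γ x ∈ Set.Icc γmin γmax)
    (hρrange : ∀ x, ρ x ∈ Set.Icc (0:ℝ) 1)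
    (hz : ∀ x, z x = Real.sign (1/2 - ρ x) *
      (γ x * ρ x * (1 - ρ x) - γ x * (1/2) * (1 - 1/2)))
    (hBVz : BoundedVariationOn z Set.univ)
    (hBVγ : BoundedVariationOn γ Set.univ) :
    eVariationOn (fun x => γ x * ρ x * (1 - ρ x)) Set.univ ≤
      eVariationOn z Set.univ + (1 / 4) * eVariationOn γ Set.univ :=
  stmt_16_general γ ρ z γmin γmax hγmin hγrange hz
end
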